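/- For any nonnegative function f : X → [0,∞], the polar transform has the infimum representation f°(y) = inf{λ ∈ (0,∞) : ⟨x,y⟩ ≤ λ f(x) for all x ∈ X} (with the product λ f(x) in [0,∞] and inf ∅ = +∞). -/
import Mathlib


open scoped ENNReal

/-- The polar of a nonnegative function `f`:
`f°(y) = sup_x (⟨x,y⟩₊ ⊙ f(x)⁻¹)` with lower multiplication (`0 * ∞ = 0` in `ℝ≥0∞`)
and `0⁻¹ = ∞`, `∞⁻¹ = 0`. -/
noncomputable def polarFn {X Y : Type*} [AddCommGroup X] [Module ℝ X]
    [AddCommGroup Y] [Module ℝ Y] (p : X →ₗ[ℝ] Y →ₗ[ℝ] ℝ) (f : X → ℝ≥0∞) (y : Y) : ℝ≥0∞ :=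
  ⨆ x : X, ENNReal.ofReal (p x y) * (f x)⁻¹

private lemma ereal_coe_le_coe_ennreal (a : ℝ) (c : ℝ≥0∞) :
    (a : EReal) ≤ (c : EReal) ↔ ENNReal.ofReal a ≤ c := by
  rcases eq_or_ne c ⊤ with rfl | hc
  · simp [le_top]
  · have key : (c : EReal) = ((c.toReal : ℝ) : EReal) := by
      conv_lhs => rw [← ENNReal.ofReal_toReal hc]
      rw [EReal.coe_ennreal_ofReal, max_eq_left ENNReal.toReal_nonneg]
    rw [ENNReal.ofReal_le_iff_le_toReal hc, key, EReal.coe_le_coe_iff]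

/-- The infimum representation of the polar transform:
`f°(y) = inf{λ ∈ (0,∞) : ⟨x,y⟩ ≤ λ f(x) for all x}`, with `inf ∅ = +∞`. -/
theorem polarFn_eq_inf {X Y : Type*} [AddCommGroup X] [Module ℝ X]
    [AddCommGroup Y] [Module ℝ Y] (p : X →ₗ[ℝ] Y →ₗ[ℝ] ℝ) (f : X → ℝ≥0∞) (y : Y) :
    polarFn p f y =
      sInf {l : ℝ≥0∞ | ∃ r : ℝ, 0 < r ∧ l = ENNReal.ofReal r ∧
        ∀ x : X, (p x y : EReal) ≤ ((ENNReal.ofReal r * f x : ℝ≥0∞) : EReal)} := by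
  apply le_antisymm
  · refine le_sInf ?_
    rintro l ⟨r, hr, rfl, h⟩
    refine iSup_le fun x => ?_
    have h' := (ereal_coe_le_coe_ennreal _ _).mp (h x)
    rw [← div_eq_mul_inv,
      ENNReal.div_le_iff_le_mul (Or.inr ENNReal.ofReal_ne_top)
        (Or.inr (ENNReal.ofReal_pos.mpr hr).ne')]
    exact h'
  · refine le_of_forall_gt_imp_ge_of_dense fun c hc => ?_
    rcases eq_or_ne c ⊤ with rfl | hct
    · exact le_top
    have hc0 : c ≠ 0 := fun h => by simp [h] at hc
    refine sInf_le ⟨c.toReal, ENNReal.toReal_pos hc0 hct,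
      (ENNReal.ofReal_toReal hct).symm, fun x => ?_⟩
    rw [ENNReal.ofReal_toReal hct, ereal_coe_le_coe_ennreal]
    have hx : ENNReal.ofReal (p x y) * (f x)⁻¹ ≤ c := (le_iSup _ x).trans hc.le
    rw [← div_eq_mul_inv,
      ENNReal.div_le_iff_le_mul (Or.inr hct) (Or.inr hc0)] at hx
    exact hx
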